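/- Suppose a sequence of nonnegative numbers satisfies: for all p ≥ 1, A((p+1)β²)^{1/β²} ≤ C p² A((p+1)β)^{1/β}, where β > 1, A(q) := (∫_{𝕋^N} θ^q dx) for a fixed nonnegative measurable θ with A(q₀) < ∞ for some q₀ ≥ 2β. Then θ ∈ L^∞(𝕋^N) and ‖θ‖_{L^∞} is bounded by a constant depending only on C, β, and A(q₀). -/

import Mathlib

/-!
Put `q_k = q₀ β^k` and apply the reverse Hölder step at `p = q_k / β - 1 ≥ 1`, which links
`A(q_k)` to `A(q_{k+1})`. In logarithmic form the iteration multiplies the exponent by `β` and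
adds `β² log⁺(C p²)`, so `log A(q_k) ≤ β^k (log A(q₀) + β ∑ log⁺(C p_j²) / β^j)`. Since `p_j`
grows only geometrically, `log⁺(C p_j²)` grows linearly in `j` and the series converges. Hence
`A(q_k) ≤ M^{q_k}` for a constant `M`, and Chebyshev's inequality with `q_k → ∞` gives `θ ≤ M`
almost everywhere.
-/

open MeasureTheory Filter Real Finset

lemma summable_div_pow_of_le_linear {β A B : ℝ} (hβ : 1 < β) {f : ℕ → ℝ}
    (hf₀ : ∀ k, 0 ≤ f k) (hf : ∀ k, f k ≤ A + B * k) : Summable fun k => f k / β ^ k := by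
  have hr₀ : 0 ≤ β⁻¹ := by positivity
  have hr₁ : β⁻¹ < 1 := inv_lt_one_of_one_lt₀ hβ
  have hg : Summable fun k : ℕ => A * β⁻¹ ^ k + B * ((k : ℝ) ^ 1 * β⁻¹ ^ k) :=
    ((summable_geometric_of_lt_one hr₀ hr₁).mul_left A).add
      ((summable_pow_mul_geometric_of_norm_lt_one 1 (by rwa [norm_of_nonneg hr₀])).mul_left B)
  refine hg.of_nonneg_of_le (fun k => div_nonneg (hf₀ k) (by positivity)) fun k => ?_
  rw [div_eq_mul_inv, ← inv_pow, pow_one]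
  nlinarith [hf k, pow_nonneg hr₀ k]

lemma le_ofReal_exp_of_rpow_le_mul_rpow {u : ℕ → ENNReal} {c : ℕ → ℝ} {β b₀ : ℝ}
    (hβ : 0 < β) (hc : ∀ n, 0 < c n) (h₀ : u 0 ≤ ENNReal.ofReal (exp b₀))
    (hstep : ∀ n, u (n + 1) ^ (1 / β ^ 2) ≤ ENNReal.ofReal (c n) * u n ^ (1 / β)) (n : ℕ) :
    u n ≤ ENNReal.ofReal (exp (β ^ n * (b₀ + ∑ k ∈ range n, β * log (c k) / β ^ k))) := by
  induction n with
  | zero => simpa using h₀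
  | succ n ih =>
    set E := β ^ n * (b₀ + ∑ k ∈ range n, β * log (c k) / β ^ k)
    have hroot : u (n + 1) ^ (1 / β ^ 2) ≤ ENNReal.ofReal (exp (log (c n) + E * (1 / β))) :=
      calc u (n + 1) ^ (1 / β ^ 2) ≤ ENNReal.ofReal (c n) * ENNReal.ofReal (exp E) ^ (1 / β) :=
            (hstep n).trans (by gcongr)
        _ = _ := by
          rw [ENNReal.ofReal_rpow_of_pos (exp_pos _), ← exp_mul, ← ENNReal.ofReal_mul (hc n).le,
            exp_add, exp_log (hc n)]
    rw [one_div, ENNReal.rpow_inv_le_iff (by positivity), ENNReal.ofReal_rpow_of_pos (exp_pos _),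
      ← exp_mul] at hroot
    convert hroot using 3
    rw [sum_range_succ]
    field_simp
    ring

section Chebyshev

variable {α : Type*} [MeasurableSpace α] {μ : Measure α} {f : α → ℝ} {M : ℝ}

lemma measure_setOf_le_le_ofReal_div_rpow (hf : AEMeasurable f μ) (hM : 0 ≤ M) {b q : ℝ}
    (hb : 0 < b) (hq : 0 < q) (h : ∫⁻ x, ENNReal.ofReal (f x ^ q) ∂μ ≤ ENNReal.ofReal (M ^ q)) :
    μ {x | b ≤ f x} ≤ ENNReal.ofReal ((M / b) ^ q) := by
  have hbq : 0 < b ^ q := rpow_pos_of_pos hb q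
  calc μ {x | b ≤ f x}
      ≤ μ {x | ENNReal.ofReal (b ^ q) ≤ ENNReal.ofReal (f x ^ q)} :=
        measure_mono fun x hx => ENNReal.ofReal_le_ofReal (rpow_le_rpow hb.le hx hq.le)
    _ ≤ (∫⁻ x, ENNReal.ofReal (f x ^ q) ∂μ) / ENNReal.ofReal (b ^ q) :=
        meas_ge_le_lintegral_div (hf.pow_const q).ennreal_ofReal
          (ENNReal.ofReal_pos.2 hbq).ne' ENNReal.ofReal_ne_top
    _ ≤ ENNReal.ofReal (M ^ q) / ENNReal.ofReal (b ^ q) := by gcongr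
    _ = ENNReal.ofReal ((M / b) ^ q) := by
        rw [← ENNReal.ofReal_div_of_pos hbq, div_rpow hM hb.le]

lemma ae_le_of_lintegral_rpow_le (hf : AEMeasurable f μ) (hM : 0 ≤ M) {q : ℕ → ℝ}
    (hq : Tendsto q atTop atTop)
    (h : ∀ n, ∫⁻ x, ENNReal.ofReal (f x ^ q n) ∂μ ≤ ENNReal.ofReal (M ^ q n)) :
    ∀ᵐ x ∂μ, f x ≤ M := by
  refine (ae_le_const_iff_forall_gt_measure_zero f M).2 fun b hMb => ?_
  have hb : 0 < b := hM.trans_lt hMb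
  have hlim : Tendsto (fun n => ENNReal.ofReal ((M / b) ^ q n)) atTop (nhds 0) := by
    simpa using ENNReal.tendsto_ofReal
      ((tendsto_rpow_atTop_of_base_lt_one _ (by linarith [div_nonneg hM hb.le])
        ((div_lt_one hb).2 hMb)).comp hq)
  refine le_zero_iff.1 (ge_of_tendsto hlim ?_)
  filter_upwards [hq.eventually_gt_atTop 0] with n hqn
  exact measure_setOf_le_le_ofReal_div_rpow hf hM hb hqn (h n)

end Chebyshev

noncomputable def moserParam (q₀ β : ℝ) (k : ℕ) : ℝ := q₀ * β ^ k / β - 1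

section MoserParam

variable {q₀ β : ℝ}

lemma moserParam_add_one_mul (hβ : β ≠ 0) (k : ℕ) : (moserParam q₀ β k + 1) * β = q₀ * β ^ k := by
  simp only [moserParam, sub_add_cancel, div_mul_cancel₀ _ hβ]

lemma moserParam_add_one_mul_sq (hβ : β ≠ 0) (k : ℕ) :
    (moserParam q₀ β k + 1) * β ^ 2 = q₀ * β ^ (k + 1) := by
  rw [sq, ← mul_assoc, moserParam_add_one_mul hβ, pow_succ, mul_assoc]

lemma one_le_moserParam (hβ : 1 < β) (hq₀ : 2 * β ≤ q₀) (k : ℕ) : 1 ≤ moserParam q₀ β k := by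
  have hβ₀ : 0 < β := one_pos.trans hβ
  rw [moserParam, le_sub_iff_add_le, le_div_iff₀ hβ₀]
  nlinarith [one_le_pow₀ (n := k) hβ.le]

lemma moserParam_le (hβ : 1 ≤ β) (hq₀ : 0 ≤ q₀) (k : ℕ) : moserParam q₀ β k ≤ q₀ * β ^ k := by
  have : q₀ * β ^ k / β ≤ q₀ * β ^ k := div_le_self (by positivity) hβ
  rw [moserParam]
  linarith

lemma log_max_mul_moserParam_sq_le (C : ℝ) (hβ : 1 < β) (hq₀ : 2 * β ≤ q₀) (k : ℕ) :
    log (max (C * moserParam q₀ β k ^ 2) 1) ≤ log (max C 1) + 2 * log q₀ + 2 * log β * k := by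
  have hp : 1 ≤ moserParam q₀ β k := one_le_moserParam hβ hq₀ k
  have hq₀₀ : 0 < q₀ := by linarith
  have hmax : max (C * moserParam q₀ β k ^ 2) 1 ≤ max C 1 * (q₀ * β ^ k) ^ 2 := by
    have hp2 : 1 ≤ moserParam q₀ β k ^ 2 := one_le_pow₀ hp
    calc max (C * moserParam q₀ β k ^ 2) 1 ≤ max C 1 * moserParam q₀ β k ^ 2 :=
          max_le (by gcongr; exact le_max_left _ _) (by nlinarith [le_max_right C 1])
      _ ≤ max C 1 * (q₀ * β ^ k) ^ 2 := by
          gcongr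
          exact moserParam_le hβ.le hq₀₀.le k
  calc log (max (C * moserParam q₀ β k ^ 2) 1) ≤ log (max C 1 * (q₀ * β ^ k) ^ 2) :=
        log_le_log (by positivity) hmax
    _ = log (max C 1) + 2 * log q₀ + 2 * log β * k := by
        rw [log_mul (by positivity) (by positivity), log_pow, log_mul hq₀₀.ne' (by positivity),
          log_pow]
        push_cast
        ring

lemma summable_log_max_mul_moserParam_sq (C : ℝ) (hβ : 1 < β) (hq₀ : 2 * β ≤ q₀) :
    Summable fun k => log (max (C * moserParam q₀ β k ^ 2) 1) / β ^ k :=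
  summable_div_pow_of_le_linear hβ (fun _ => log_nonneg (le_max_right _ _))
    (log_max_mul_moserParam_sq_le C hβ hq₀)

end MoserParam

theorem stmt_10_general {X : Type*} [MeasureSpace X]
    (C β q₀ K : ℝ) (hβ : 1 < β) (hq₀ : 2 * β ≤ q₀) :
    ∃ M : ℝ, ∀ θ : X → ℝ, Measurable θ → (∀ x, 0 ≤ θ x) →
      (∫⁻ x, ENNReal.ofReal (θ x ^ q₀)) ≤ ENNReal.ofReal K →
      (∀ p : ℝ, 1 ≤ p →
        (∫⁻ x, ENNReal.ofReal (θ x ^ ((p + 1) * β ^ 2))) ^ (1 / β ^ 2)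
          ≤ ENNReal.ofReal (C * p ^ 2)
              * (∫⁻ x, ENNReal.ofReal (θ x ^ ((p + 1) * β))) ^ (1 / β)) →
      ∀ᵐ x, θ x ≤ M := by
  have hβ₀ : 0 < β := one_pos.trans hβ
  set c : ℕ → ℝ := fun k => max (C * moserParam q₀ β k ^ 2) 1
  have hsum : Summable fun k => log (c k) / β ^ k := summable_log_max_mul_moserParam_sq C hβ hq₀
  set S := ∑' k, log (c k) / β ^ k
  refine ⟨exp ((K + β * S) / q₀), fun θ hθ _ hK hstep => ?_⟩
  refine ae_le_of_lintegral_rpow_le hθ.aemeasurable (exp_pos _).le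
    ((tendsto_pow_atTop_atTop_of_one_lt hβ).const_mul_atTop (by linarith)) fun n => ?_
  set u : ℕ → ENNReal := fun n => ∫⁻ x, ENNReal.ofReal (θ x ^ (q₀ * β ^ n))
  have hu₀ : u 0 ≤ ENNReal.ofReal (exp K) := by
    simpa [u] using hK.trans (ENNReal.ofReal_le_ofReal ((le_add_of_nonneg_right zero_le_one).trans
      (add_one_le_exp K)))
  have hu_step (k : ℕ) : u (k + 1) ^ (1 / β ^ 2) ≤ ENNReal.ofReal (c k) * u k ^ (1 / β) := by
    have h := hstep _ (one_le_moserParam hβ hq₀ k)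
    rw [moserParam_add_one_mul hβ₀.ne', moserParam_add_one_mul_sq hβ₀.ne'] at h
    exact h.trans (mul_le_mul_left (ENNReal.ofReal_le_ofReal (le_max_left _ _)) _)
  have hu := le_ofReal_exp_of_rpow_le_mul_rpow hβ₀
    (fun k => one_pos.trans_le (le_max_right _ _)) hu₀ hu_step n
  have hpartial : ∑ k ∈ range n, β * log (c k) / β ^ k ≤ β * S := by
    simp only [mul_div_assoc, ← mul_sum]
    exact mul_le_mul_of_nonneg_left
      (hsum.sum_le_tsum _ fun k _ => div_nonneg (log_nonneg (le_max_right _ _)) (by positivity))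
      hβ₀.le
  refine hu.trans (ENNReal.ofReal_le_ofReal ?_)
  rw [← exp_mul, div_mul_eq_mul_div, mul_comm q₀, mul_div_assoc,
    mul_div_cancel_right₀ _ (by linarith : q₀ ≠ 0), mul_comm]
  gcongr

theorem stmt_10 {X : Type*} [MeasureSpace X] [IsProbabilityMeasure (volume : Measure X)]
    (C β q₀ K : ℝ) (hC : 0 < C) (hβ : 1 < β) (hq₀ : 2 * β ≤ q₀) (hK : 0 ≤ K) :
    ∃ M : ℝ, ∀ θ : X → ℝ, Measurable θ → (∀ x, 0 ≤ θ x) →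
      (∫⁻ x, ENNReal.ofReal (θ x ^ q₀)) ≤ ENNReal.ofReal K →
      (∀ p : ℝ, 1 ≤ p →
        (∫⁻ x, ENNReal.ofReal (θ x ^ ((p + 1) * β ^ 2))) ^ (1 / β ^ 2)
          ≤ ENNReal.ofReal (C * p ^ 2)
              * (∫⁻ x, ENNReal.ofReal (θ x ^ ((p + 1) * β))) ^ (1 / β)) →
      ∀ᵐ x, θ x ≤ M :=
  stmt_10_general C β q₀ K hβ hq₀
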